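/- With A = R + φ(A*)^{-1}L + ((φ-1)/(q-1))(A*)^{-1} and y^{↓↓} = ∑_{z ≤ y} ẑ, one has A y^{↓↓} = ((φ q^{dim y} - q^{N - dim y})/(q-1)) y^{↓↓} + ∑_{z covers y} z^{↓↓} for every subspace y. -/

import Mathlib

/-!
Evaluate both sides at a subspace `x`; write `d = dim x`, `m = dim y`. The left side is
`#{z ⋖ x, z ≤ y} + φ q^d #{x ⋖ z ≤ y} + (φ - 1)/(q - 1) q^d [x ≤ y]`, the right side is
`(φ q^m - q^(N-m))/(q - 1) [x ≤ y] + #{y ⋖ z, x ≤ z}`.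

If `x ≤ y` the three counts are `(q^d - 1)/(q - 1)`, `(q^m - q^d)/(q^d (q - 1))` and
`(q^(N-m) - 1)/(q - 1)`. Subspaces covering `x` inside `y` are counted by sorting the
`q^m - q^d` vectors `v ∈ y \ x` according to the cover `x ⊔ ⟨v⟩`, each cover receiving
`q^(d+1) - q^d` of them; hyperplanes of `x` are counted the same way as lines of its dual.

If `x ≰ y` the middle count vanishes, and the other two agree in any modular lattice: both equal
`1` if `x ⊓ y ⋖ x`, equivalently `y ⋖ x ⊔ y`, and `0` otherwise.
-/

open Matrix

noncomputable section
open scoped Classical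

variable (F : Type) [Field F] [Fintype F] (N : ℕ)

/-- The vertex set: all subspaces of the `N`-dimensional vector space over `GF(q)`. -/
abbrev X := Submodule F (Fin N → F)

noncomputable instance : Fintype (X F N) := Fintype.ofFinite _

/-- The dimension of a subspace. -/
def dimS (y : X F N) : ℕ := Module.finrank F y

/-- `y` covers `z` : `z ⊆ y` and `dim y = dim z + 1`. -/
def Covers (y z : X F N) : Prop := z ≤ y ∧ dimS F N y = dimS F N z + 1

/-- The raising matrix `R`. -/
def R : Matrix (X F N) (X F N) ℂ := fun y z => if Covers F N y z then 1 else 0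

/-- The lowering matrix `L = Rᵗ`. -/
def L : Matrix (X F N) (X F N) ℂ := (R F N)ᵀ

/-- The diagonal matrix `A*` with `(y,y)`-entry `q^{-dim y}`. -/
def Astar : Matrix (X F N) (X F N) ℂ :=
  Matrix.diagonal fun y => (Fintype.card F : ℂ) ^ (-(dimS F N y : ℤ))


/-- `y^{↓↓} = ∑_{z ≤ y} ẑ` in `V = ℂ^X`. -/
def dd (y : X F N) : X F N → ℂ :=
  ∑ z ∈ Finset.univ.filter (fun z : X F N => z ≤ y), Pi.single z (1 : ℂ)

open Module

theorem Nat.cast_mul_tsub_of_eq {R : Type*} [Ring R] {n a b c d : ℕ} (hba : b ≤ a)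
    (hdc : d ≤ c) (h : n * (a - b) = c - d) : (n : R) * (a - b) = c - d := by
  rw [← Nat.cast_sub hba, ← Nat.cast_sub hdc, ← Nat.cast_mul, h]

theorem ncard_covBy_le_eq_ncard_covBy_ge {α : Type*} [Lattice α] [IsModularLattice α] {x y : α}
    (h : ¬ x ≤ y) : {z | z ⋖ x ∧ z ≤ y}.ncard = {z | y ⋖ z ∧ x ≤ z}.ncard := by
  have hlow : {z | z ⋖ x ∧ z ≤ y} ⊆ {x ⊓ y} := fun z ⟨hzx, hzy⟩ =>
    ((hzx.wcovBy.eq_or_eq (le_inf hzx.le hzy) inf_le_left).resolve_right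
      (by rwa [inf_eq_left])).symm
  have hup : {z | y ⋖ z ∧ x ≤ z} ⊆ {x ⊔ y} := fun z ⟨hyz, hxz⟩ =>
    ((hyz.wcovBy.eq_or_eq le_sup_right (sup_le hxz hyz.le)).resolve_left
      (by rwa [sup_eq_right])).symm
  by_cases hc : x ⊓ y ⋖ x
  · rw [hlow.antisymm (Set.singleton_subset_iff.2 ⟨hc, inf_le_right⟩),
      hup.antisymm (Set.singleton_subset_iff.2 ⟨covBy_sup_of_inf_covBy_left hc, le_sup_left⟩),
      Set.ncard_singleton, Set.ncard_singleton]
  · have hlow₀ : {z | z ⋖ x ∧ z ≤ y} = ∅ :=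
      Set.eq_empty_of_forall_notMem fun z hz => hc (hlow hz ▸ hz.1)
    have hup₀ : {z | y ⋖ z ∧ x ≤ z} = ∅ :=
      Set.eq_empty_of_forall_notMem fun z hz => hc <| by
        rw [inf_comm]
        exact inf_covBy_of_covBy_sup_left (by rw [sup_comm, ← (hup hz : z = x ⊔ y)]; exact hz.1)
    rw [hlow₀, hup₀]

section Counting

variable {K V : Type*} [Field K] [AddCommGroup V] [Module K V] [Module.Finite K V]

namespace Submodule

theorem covBy_iff_le_and_finrank_succ_eq {z x : Submodule K V} :
    z ⋖ x ↔ z ≤ x ∧ finrank K z + 1 = finrank K x := by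
  constructor
  · intro h
    obtain ⟨v, hvx, hvz⟩ := SetLike.exists_of_lt h.lt
    have hsup : K ∙ v ⊔ z = x :=
      (h.wcovBy.eq_or_eq le_sup_right
        (sup_le ((span_singleton_le_iff_mem v x).2 hvx) h.le)).resolve_left
        fun heq => hvz (heq ▸ mem_sup_left (mem_span_singleton_self v))
    refine ⟨h.le, ?_⟩
    rw [← hsup, sup_comm, finrank_sup_span_singleton hvz]
  · rintro ⟨hle, hrank⟩
    refine ⟨hle.lt_of_ne (by rintro rfl; omega), fun w hzw hwx => ?_⟩
    have := finrank_lt_finrank_of_lt hzw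
    have := finrank_lt_finrank_of_lt hwx
    omega

variable [Finite K]

theorem ncard_coe_sdiff {x y : Submodule K V} (hxy : x ≤ y) :
    ((y : Set V) \ x).ncard = Nat.card K ^ finrank K y - Nat.card K ^ finrank K x := by
  have : Finite V := Module.finite_of_finite K
  rw [Set.ncard_sdiff hxy, ← Nat.card_coe_set_eq, ← Nat.card_coe_set_eq]
  exact congr_arg₂ _ (natCard_eq_pow_finrank (K := K) (V := y))
    (natCard_eq_pow_finrank (K := K) (V := x))

theorem ncard_covBy_le_mul {x y : Submodule K V} (hxy : x ≤ y) :
    {z | x ⋖ z ∧ z ≤ y}.ncard * (Nat.card K ^ (finrank K x + 1) - Nat.card K ^ finrank K x) =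
      Nat.card K ^ finrank K y - Nat.card K ^ finrank K x := by
  have : Finite V := Module.finite_of_finite K
  have := Fintype.ofFinite V
  have := Fintype.ofFinite (Submodule K V)
  set S := {z | x ⋖ z ∧ z ≤ y}
  have hmaps : ∀ v ∈ ((y : Set V) \ x).toFinset, K ∙ v ⊔ x ∈ S.toFinset := by
    intro v hv
    simp only [Set.mem_toFinset, Set.mem_sdiff, SetLike.mem_coe] at hv
    simp only [S, Set.mem_toFinset, Set.mem_ofPred_eq]
    exact ⟨covBy_span_singleton_sup hv.2, sup_le ((span_singleton_le_iff_mem v y).2 hv.1) hxy⟩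
  have hfiber : ∀ z ∈ S.toFinset,
      {v ∈ ((y : Set V) \ x).toFinset | K ∙ v ⊔ x = z} = ((z : Set V) \ x).toFinset := by
    intro z hz
    simp only [S, Set.mem_toFinset, Set.mem_ofPred_eq] at hz
    ext v
    simp only [Finset.mem_filter, Set.mem_toFinset, Set.mem_sdiff, SetLike.mem_coe]
    constructor
    · rintro ⟨⟨-, hvx⟩, rfl⟩
      exact ⟨mem_sup_left (mem_span_singleton_self v), hvx⟩
    · rintro ⟨hvz, hvx⟩
      refine ⟨⟨hz.2 hvz, hvx⟩, ?_⟩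
      exact ((hz.1.wcovBy.eq_or_eq le_sup_right
        (sup_le ((span_singleton_le_iff_mem v z).2 hvz) hz.1.le)).resolve_left
        fun heq => hvx (heq ▸ mem_sup_left (mem_span_singleton_self v)))
  have hcard : ∀ z ∈ S.toFinset, ((z : Set V) \ x).toFinset.card =
      Nat.card K ^ (finrank K x + 1) - Nat.card K ^ finrank K x := by
    intro z hz
    simp only [S, Set.mem_toFinset, Set.mem_ofPred_eq] at hz
    rw [← Set.ncard_eq_toFinset_card', ncard_coe_sdiff hz.1.le,
      (covBy_iff_le_and_finrank_succ_eq.1 hz.1).2]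
  rw [← ncard_coe_sdiff hxy, Set.ncard_eq_toFinset_card', Set.ncard_eq_toFinset_card',
    Finset.card_eq_sum_card_fiberwise hmaps, Finset.sum_congr rfl fun z hz => by rw [hfiber z hz],
    Finset.sum_congr rfl hcard, Finset.sum_const, smul_eq_mul]

theorem ncard_covBy_top_mul :
    {z : Submodule K V | z ⋖ ⊤}.ncard * (Nat.card K - 1) = Nat.card K ^ finrank K V - 1 := by
  have key := ncard_covBy_le_mul (K := K) (bot_le (a := (⊤ : Submodule K (Dual K V))))
  simp only [finrank_bot, finrank_top, Subspace.dual_finrank_eq, pow_zero, zero_add, pow_one,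
    le_top, and_true] at key
  rw [← key]
  congr 1
  let e := Subspace.orderIsoFiniteDimensional (K := K) (V := V)
  rw [← Nat.card_coe_set_eq, ← Nat.card_coe_set_eq]
  refine Nat.card_congr (Equiv.subtypeEquiv (e.toEquiv.trans OrderDual.ofDual) fun z => ?_)
  rw [Set.mem_ofPred_eq, Set.mem_ofPred_eq, ← apply_covBy_apply_iff e, OrderIso.map_top]
  exact ofDual_covBy_ofDual_iff.symm

theorem ncard_covBy_mul (x : Submodule K V) :
    {z | z ⋖ x}.ncard * (Nat.card K - 1) = Nat.card K ^ finrank K x - 1 := by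
  rw [← ncard_covBy_top_mul (V := x),
    ← Set.ncard_image_of_injective _ (map_injective_of_injective x.injective_subtype)]
  congr 2
  ext z
  simp only [Set.mem_image, Set.mem_ofPred_eq]
  constructor
  · intro h
    refine ⟨comap x.subtype z, ?_, by rw [map_comap_subtype, inf_eq_right.2 h.le]⟩
    rw [covBy_iff_le_and_finrank_succ_eq, ← finrank_map_subtype_eq, map_comap_subtype,
      inf_eq_right.2 h.le, finrank_top]
    exact ⟨le_top, (covBy_iff_le_and_finrank_succ_eq.1 h).2⟩
  · rintro ⟨z', hz', rfl⟩
    simpa using map_covBy_of_injective x.injective_subtype hz'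

end Submodule

end Counting

omit [Fintype F] in
theorem covers_iff_covBy {y z : X F N} : Covers F N y z ↔ z ⋖ y := by
  rw [Submodule.covBy_iff_le_and_finrank_succ_eq, Covers, dimS, dimS, eq_comm]

theorem dd_apply (y z : X F N) : dd F N y z = if z ≤ y then 1 else 0 := by
  simp [dd, Finset.sum_apply, Pi.single_apply]

theorem sum_boole_mul_boole {ι R : Type*} [Fintype ι] [NonAssocSemiring R] (P Q : ι → Prop) :
    ∑ i, (if P i then (1 : R) else 0) * (if Q i then 1 else 0) = {i | P i ∧ Q i}.ncard := by
  simp only [boole_mul, ← ite_and]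
  rw [Finset.sum_boole, ← Set.ncard_coe_finset, Finset.coe_filter_univ]

theorem R_mulVec_dd_apply (y x : X F N) :
    (R F N *ᵥ dd F N y) x = {z | z ⋖ x ∧ z ≤ y}.ncard := by
  simp only [mulVec, dotProduct, R, dd_apply, covers_iff_covBy]
  exact sum_boole_mul_boole _ _

theorem L_mulVec_dd_apply (y x : X F N) :
    (L F N *ᵥ dd F N y) x = {z | x ⋖ z ∧ z ≤ y}.ncard := by
  simp only [mulVec, dotProduct, L, R, transpose_apply, dd_apply, covers_iff_covBy]
  exact sum_boole_mul_boole _ _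

theorem Astar_inv :
    (Astar F N)⁻¹ = diagonal fun y => (Fintype.card F : ℂ) ^ dimS F N y := by
  refine inv_eq_right_inv ?_
  rw [Astar, diagonal_mul_diagonal, ← diagonal_one]
  congr 1
  ext y
  rw [_root_.zpow_neg, zpow_natCast, inv_mul_cancel₀ (pow_ne_zero _ (by simp))]

theorem mulVec_dd_apply (φ c : ℂ) (y x : X F N) :
    ((R F N + φ • ((Astar F N)⁻¹ * L F N) + c • (Astar F N)⁻¹) *ᵥ dd F N y) x =
      {z | z ⋖ x ∧ z ≤ y}.ncard
        + φ * (Fintype.card F : ℂ) ^ dimS F N x * {z | x ⋖ z ∧ z ≤ y}.ncard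
        + c * (Fintype.card F : ℂ) ^ dimS F N x * (if x ≤ y then 1 else 0) := by
  simp only [add_mulVec, smul_mulVec, ← mulVec_mulVec, Astar_inv, mulVec_diagonal, Pi.add_apply,
    Pi.smul_apply, smul_eq_mul, R_mulVec_dd_apply, L_mulVec_dd_apply, dd_apply]
  ring

theorem smul_dd_add_sum_dd_apply (c : ℂ) (y x : X F N) :
    (c • dd F N y + ∑ z ∈ Finset.univ.filter (fun z : X F N => Covers F N z y), dd F N z) x =
      c * (if x ≤ y then 1 else 0) + {z | y ⋖ z ∧ x ≤ z}.ncard := by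
  simp only [Pi.add_apply, Pi.smul_apply, smul_eq_mul, Finset.sum_apply, dd_apply,
    Finset.sum_boole, covers_iff_covBy]
  rw [Finset.filter_filter, ← Set.ncard_coe_finset, Finset.coe_filter_univ]

omit [Fintype F] in
theorem dimS_top : dimS F N ⊤ = N := by
  rw [dimS, finrank_top, finrank_fin_fun]

omit [Fintype F] in
theorem dimS_le (y : X F N) : dimS F N y ≤ N :=
  (Submodule.finrank_mono le_top).trans_eq (dimS_top F N)

theorem cast_ncard_lower_covers (x : X F N) :
    ({z | z ⋖ x}.ncard : ℂ) * ((Fintype.card F : ℂ) - 1) =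
      (Fintype.card F : ℂ) ^ dimS F N x - 1 := by
  have hq : 1 ≤ Nat.card F := Nat.card_pos
  simpa [dimS, Nat.card_eq_fintype_card] using
    Nat.cast_mul_tsub_of_eq (R := ℂ) hq (Nat.one_le_pow _ _ hq) (Submodule.ncard_covBy_mul x)

theorem cast_ncard_upper_covers_le {x y : X F N} (hxy : x ≤ y) :
    ({z | x ⋖ z ∧ z ≤ y}.ncard : ℂ) *
        ((Fintype.card F : ℂ) ^ dimS F N x * ((Fintype.card F : ℂ) - 1)) =
      (Fintype.card F : ℂ) ^ dimS F N y - (Fintype.card F : ℂ) ^ dimS F N x := by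
  have hq : 1 ≤ Nat.card F := Nat.card_pos
  have h := Nat.cast_mul_tsub_of_eq (R := ℂ) (pow_le_pow_right₀ hq (Nat.le_succ _))
    (pow_le_pow_right₀ hq (Submodule.finrank_mono hxy)) (Submodule.ncard_covBy_le_mul hxy)
  push_cast [Nat.card_eq_fintype_card, pow_succ] at h
  rw [dimS, dimS]
  linear_combination h

theorem cast_ncard_upper_covers (y : X F N) :
    ({z | y ⋖ z}.ncard : ℂ) * ((Fintype.card F : ℂ) - 1) =
      (Fintype.card F : ℂ) ^ (N - dimS F N y) - 1 := by
  have h := cast_ncard_upper_covers_le F N (le_top : y ≤ ⊤)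
  have hN : (Fintype.card F : ℂ) ^ N =
      (Fintype.card F : ℂ) ^ dimS F N y * (Fintype.card F : ℂ) ^ (N - dimS F N y) := by
    rw [← pow_add, Nat.add_sub_cancel' (dimS_le F N y)]
  rw [dimS_top, hN] at h
  simp only [le_top, and_true] at h
  exact mul_left_cancel₀ (pow_ne_zero _ (by simp : (Fintype.card F : ℂ) ≠ 0))
    (by linear_combination h)

theorem stmt_18 (φ : ℝ) :
    let q : ℂ := (Fintype.card F : ℂ)
    let A : Matrix (X F N) (X F N) ℂ :=
      R F N + (φ : ℂ) • ((Astar F N)⁻¹ * L F N) +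
        (((φ : ℂ) - 1) / (q - 1)) • (Astar F N)⁻¹
    ∀ y : X F N,
      A.mulVec (dd F N y) =
        (((φ : ℂ) * q ^ (dimS F N y) - q ^ (N - dimS F N y)) / (q - 1)) • dd F N y +
          ∑ z ∈ Finset.univ.filter (fun z : X F N => Covers F N z y), dd F N z := by
  intro q A y
  funext x
  rw [mulVec_dd_apply, smul_dd_add_sum_dd_apply]
  by_cases hxy : x ≤ y
  · have hlow : {z | z ⋖ x ∧ z ≤ y} = {z | z ⋖ x} :=
      Set.ext fun z => and_iff_left_of_imp fun h => h.le.trans hxy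
    have hup : {z | y ⋖ z ∧ x ≤ z} = {z | y ⋖ z} :=
      Set.ext fun z => and_iff_left_of_imp fun h => hxy.trans h.le
    have hq1 : q - 1 ≠ 0 := sub_ne_zero.2 (by simpa [q] using Fintype.one_lt_card.ne')
    rw [hlow, hup, if_pos hxy]
    field_simp
    linear_combination cast_ncard_lower_covers F N x + φ * cast_ncard_upper_covers_le F N hxy -
      cast_ncard_upper_covers F N y
  · have hmid : {z | x ⋖ z ∧ z ≤ y} = ∅ :=
      Set.eq_empty_of_forall_notMem fun z hz => hxy (hz.1.le.trans hz.2)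
    rw [ncard_covBy_le_eq_ncard_covBy_ge hxy, hmid, if_neg hxy]
    simp

end
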